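/- The Jaccard distance d_J(A,B) = 1 − |A ∩ B|/|A ∪ B| on nonempty finite sets satisfies the triangle inequality: d_J(A,C) ≤ d_J(A,B) + d_J(B,C). -/

import Mathlib

/-!
Writing `d(A, B) = |A ∆ B| / |A ∪ B|` and `N = |A ∩ C| + |A ∆ B| + |B ∆ C|`, both `A ∪ B` and
`B ∪ C` have at most `N` elements, so `d(A, B) + d(B, C) ≥ (|A ∆ B| + |B ∆ C|) / N`. Since
`|A ∆ C| ≤ |A ∆ B| + |B ∆ C|`, also `|A ∪ C| ≤ N`, hence
`d(A, C) = 1 - |A ∩ C| / |A ∪ C| ≤ 1 - |A ∩ C| / N`, which is that same bound.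
-/

open scoped symmDiff

namespace Finset

variable {α : Type*} [DecidableEq α]

/-- Since `x / 0 = 0`, the distance from `∅` to itself is `1`, not `0`; the triangle inequality
survives this because then `jaccardDist ∅ B = 1` for every `B`. -/
noncomputable def jaccardDist (A B : Finset α) : ℝ :=
  1 - (#(A ∩ B) : ℝ) / #(A ∪ B)

theorem card_union_eq_card_inter_add_card_symmDiff (A B : Finset α) :
    #(A ∪ B) = #(A ∩ B) + #(A ∆ B) := by
  calc #(A ∪ B) = #(A ∩ B ∪ A ∆ B) := congrArg card (inf_sup_symmDiff A B).symm
    _ = #(A ∩ B) + #(A ∆ B) := card_union_of_disjoint (disjoint_symmDiff_inf A B).symm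

theorem card_union_le_card_inter_add_card_symmDiff_add_card_symmDiff (A B C : Finset α) :
    #(A ∪ B) ≤ #(A ∩ C) + (#(A ∆ B) + #(B ∆ C)) := by
  refine (card_le_card fun x hx ↦ ?_).trans <| (card_union_le _ _).trans <|
    Nat.add_le_add_left (card_union_le _ _) _
  simp only [mem_union, mem_inter, mem_symmDiff] at hx ⊢
  tauto

theorem card_symmDiff_le_card_symmDiff_add_card_symmDiff (A B C : Finset α) :
    #(A ∆ C) ≤ #(A ∆ B) + #(B ∆ C) :=
  (card_le_card (symmDiff_triangle A B C)).trans (card_union_le _ _)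

theorem jaccardDist_nonneg (A B : Finset α) : 0 ≤ jaccardDist A B := by
  rw [jaccardDist, sub_nonneg]
  exact div_le_one_of_le₀ (mod_cast card_le_card inter_subset_union) (Nat.cast_nonneg _)

theorem jaccardDist_empty_left (B : Finset α) : jaccardDist ∅ B = 1 := by
  simp [jaccardDist]

theorem div_card_le_jaccardDist {A B : Finset α} {N : ℝ} (hN : (#(A ∪ B) : ℝ) ≤ N) :
    #(A ∆ B) / N ≤ jaccardDist A B := by
  rcases (A ∪ B).eq_empty_or_nonempty with h | h
  · obtain ⟨rfl, rfl⟩ := union_eq_empty.1 h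
    simp [jaccardDist]
  have hpos : (0 : ℝ) < #(A ∪ B) := mod_cast h.card_pos
  calc (#(A ∆ B) : ℝ) / N ≤ #(A ∆ B) / #(A ∪ B) := by gcongr
    _ = jaccardDist A B := by
      rw [jaccardDist, eq_sub_iff_add_eq, ← add_div, div_eq_one_iff_eq hpos.ne',
        card_union_eq_card_inter_add_card_symmDiff]
      push_cast
      ring

theorem jaccardDist_le_one_sub_div {A B : Finset α} (h : (A ∪ B).Nonempty) {N : ℝ}
    (hN : (#(A ∪ B) : ℝ) ≤ N) : jaccardDist A B ≤ 1 - #(A ∩ B) / N := by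
  have hpos : (0 : ℝ) < #(A ∪ B) := mod_cast h.card_pos
  unfold jaccardDist
  gcongr

theorem jaccardDist_triangle (A B C : Finset α) :
    jaccardDist A C ≤ jaccardDist A B + jaccardDist B C := by
  rcases (A ∪ C).eq_empty_or_nonempty with h | hne
  · obtain ⟨rfl, rfl⟩ := union_eq_empty.1 h
    rw [jaccardDist_empty_left, jaccardDist_empty_left B]
    exact le_add_of_nonneg_right (jaccardDist_nonneg B ∅)
  set N : ℝ := #(A ∩ C) + (#(A ∆ B) + #(B ∆ C)) with hN
  have hAB : (#(A ∪ B) : ℝ) ≤ N := by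
    rw [hN]
    exact_mod_cast card_union_le_card_inter_add_card_symmDiff_add_card_symmDiff A B C
  have hBC : (#(B ∪ C) : ℝ) ≤ N := by
    have := card_union_le_card_inter_add_card_symmDiff_add_card_symmDiff C B A
    rw [union_comm, inter_comm, symmDiff_comm C B, symmDiff_comm B A, add_comm (#(B ∆ C))] at this
    rw [hN]
    exact_mod_cast this
  have hAC : (#(A ∪ C) : ℝ) ≤ N := by
    rw [hN, card_union_eq_card_inter_add_card_symmDiff]
    exact_mod_cast Nat.add_le_add_left (card_symmDiff_le_card_symmDiff_add_card_symmDiff A B C) _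
  have hNpos : 0 < N := (Nat.cast_pos.2 hne.card_pos).trans_le hAC
  calc jaccardDist A C ≤ 1 - #(A ∩ C) / N := jaccardDist_le_one_sub_div hne hAC
    _ = #(A ∆ B) / N + #(B ∆ C) / N := by field_simp; ring
    _ ≤ jaccardDist A B + jaccardDist B C :=
      add_le_add (div_card_le_jaccardDist hAB) (div_card_le_jaccardDist hBC)

end Finset

theorem jaccard_distance_triangle_general {α : Type*} [DecidableEq α]
    (A B C : Finset α) :
    1 - ((A ∩ C).card : ℝ) / (A ∪ C).card ≤
      (1 - ((A ∩ B).card : ℝ) / (A ∪ B).card) +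
        (1 - ((B ∩ C).card : ℝ) / (B ∪ C).card) :=
  Finset.jaccardDist_triangle A B C

/-- The Jaccard distance `d_J(A,B) = 1 − |A ∩ B|/|A ∪ B|` satisfies the triangle
inequality on nonempty finite sets. -/
theorem jaccard_distance_triangle {α : Type*} [DecidableEq α]
    (A B C : Finset α) (hA : A.Nonempty) (hB : B.Nonempty) (hC : C.Nonempty) :
    1 - ((A ∩ C).card : ℝ) / (A ∪ C).card ≤
      (1 - ((A ∩ B).card : ℝ) / (A ∪ B).card) +
        (1 - ((B ∩ C).card : ℝ) / (B ∪ C).card) :=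
  jaccard_distance_triangle_general A B C
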